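/- arXiv:1711.03198 — 2 statements merged into one kernel-verified Lean document; each statement's English description precedes it below -/
import Mathlib

section
/- Let K ≥ 1 and let α ∈ ℝ^K be a probability vector. Suppose for each a ∈ {1,…,K} there are reals d_a with 0 ≤ d_a ≤ 1 and nonnegative reals D_a such that d_a ≤ √(D_a/2). Then (∑_a α(a) d_a)² ≤ (K/2) ∑_a α(a)² D_a ≤ (K/2) ∑_a α(a) D_a' whenever D_a' ≥ α(a) D_a for all a. In particular, if h(a) = ∑_{a*} α(a*) D_{a,a*} with all D_{a,a*} ≥ 0 and D_a = D_{a,a}, then (∑_a α(a) d_a)² ≤ (K/2) ∑_a α(a) h(a). -/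
open Finset

/-- The core Cauchy–Schwarz/Pinsker step in the bound `Ψ_t ≤ K/2` for Thompson
sampling with bandit feedback. -/
theorem ts_bandit_ratio_bound (K : ℕ) (hK : 1 ≤ K)
    (α d D D' : Fin K → ℝ)
    (hα0 : ∀ a, 0 ≤ α a) (hα1 : ∑ a, α a = 1)
    (hd0 : ∀ a, 0 ≤ d a) (hd1 : ∀ a, d a ≤ 1)
    (hD0 : ∀ a, 0 ≤ D a)
    (hdD : ∀ a, d a ≤ Real.sqrt (D a / 2))
    (hD' : ∀ a, α a * D a ≤ D' a)
    (Dmat : Fin K → Fin K → ℝ) (hDmat0 : ∀ a a', 0 ≤ Dmat a a')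
    (hDdiag : ∀ a, Dmat a a = D a)
    (h : Fin K → ℝ) (hh : ∀ a, h a = ∑ a', α a' * Dmat a a') :
    (∑ a, α a * d a) ^ 2 ≤ (K / 2 : ℝ) * ∑ a, (α a) ^ 2 * D a
    ∧ (K / 2 : ℝ) * ∑ a, (α a) ^ 2 * D a ≤ (K / 2 : ℝ) * ∑ a, α a * D' a
    ∧ (∑ a, α a * d a) ^ 2 ≤ (K / 2 : ℝ) * ∑ a, α a * h a := by
  have hK0 : (0 : ℝ) ≤ (K : ℝ) / 2 := by positivity
  have key : (∑ a, α a * d a) ^ 2 ≤ (K / 2 : ℝ) * ∑ a, (α a) ^ 2 * D a := by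
    have cs : (∑ a, α a * d a) ^ 2 ≤ (K : ℝ) * ∑ a, (α a * d a) ^ 2 := by
      have := sq_sum_le_card_mul_sum_sq (s := (univ : Finset (Fin K)))
        (f := fun a => α a * d a)
      simpa using this
    have step : ∀ a, (α a * d a) ^ 2 ≤ (α a) ^ 2 * (D a / 2) := by
      intro a
      have hsq : (d a) ^ 2 ≤ D a / 2 := by
        have := Real.sq_sqrt (by linarith [hD0 a] : (0:ℝ) ≤ D a / 2)
        calc (d a) ^ 2 ≤ (Real.sqrt (D a / 2)) ^ 2 :=
              pow_le_pow_left₀ (hd0 a) (hdD a) 2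
          _ = D a / 2 := this
      rw [mul_pow]
      exact mul_le_mul_of_nonneg_left hsq (sq_nonneg _)
    calc (∑ a, α a * d a) ^ 2 ≤ (K : ℝ) * ∑ a, (α a * d a) ^ 2 := cs
      _ ≤ (K : ℝ) * ∑ a, (α a) ^ 2 * (D a / 2) := by
          apply mul_le_mul_of_nonneg_left (Finset.sum_le_sum fun a _ => step a)
          positivity
      _ = (K / 2 : ℝ) * ∑ a, (α a) ^ 2 * D a := by
          rw [Finset.mul_sum, Finset.mul_sum]; congr 1; ext a; ring
  refine ⟨key, ?_, ?_⟩
  · apply mul_le_mul_of_nonneg_left _ hK0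
    apply Finset.sum_le_sum
    intro a _
    have : α a * (α a * D a) ≤ α a * D' a :=
      mul_le_mul_of_nonneg_left (hD' a) (hα0 a)
    calc (α a) ^ 2 * D a = α a * (α a * D a) := by ring
      _ ≤ α a * D' a := this
  · refine key.trans (mul_le_mul_of_nonneg_left ?_ hK0)
    apply Finset.sum_le_sum
    intro a _
    have hle : α a * D a ≤ h a := by
      rw [hh a]
      calc α a * D a = α a * Dmat a a := by rw [hDdiag]
        _ ≤ ∑ a', α a' * Dmat a a' := by
            apply Finset.single_le_sum (f := fun a' => α a' * Dmat a a')
              (fun i _ => mul_nonneg (hα0 i) (hDmat0 a i)) (mem_univ a)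
    calc (α a) ^ 2 * D a = α a * (α a * D a) := by ring
      _ ≤ α a * h a := mul_le_mul_of_nonneg_left hle (hα0 a)
end

section
/- Let G be an undirected graph on vertex set {1,…,K} with a self-loop at every vertex, and let 𝒞 be a clique cover of G of size m. Let α be a probability vector on {1,…,K}, let D_{a,a*} ≥ 0 for all a, a* with d_a ≤ √(D_{a,a}/2) and 0 ≤ d_a ≤ 1, and set h(a) = ∑_{a*} α(a*) D_{a,a*}. Then (∑_a α(a) d_a)² ≤ (m/2) · ∑_a α(a) ∑_{a'} G(a,a') h(a'), where G(a,a') = 1 if (a,a') is an edge and 0 otherwise. -/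
open Finset

/-- Key inequality in Theorem 2: the (squared) expected instantaneous regret is
bounded by `m/2` times the expected information gain under graph feedback, where
`m` is the size of a clique cover of the feedback graph. -/
theorem clique_cover_ratio_bound (K : ℕ) (hK : 1 ≤ K)
    (G : Fin K → Fin K → ℝ)
    (hG01 : ∀ a a', G a a' = 0 ∨ G a a' = 1)
    (hGsymm : ∀ a a', G a a' = G a' a)
    (hGdiag : ∀ a, G a a = 1)
    (𝒞 : Finset (Finset (Fin K))) (m : ℕ) (hm : 𝒞.card = m)
    (hcover : ∀ a : Fin K, ∃! C, C ∈ 𝒞 ∧ a ∈ C)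
    (hclique : ∀ C ∈ 𝒞, ∀ a ∈ C, ∀ a' ∈ C, G a a' = 1)
    (α d : Fin K → ℝ) (Dmat : Fin K → Fin K → ℝ)
    (hα0 : ∀ a, 0 ≤ α a) (hα1 : ∑ a, α a = 1)
    (hd0 : ∀ a, 0 ≤ d a) (hd1 : ∀ a, d a ≤ 1)
    (hDmat0 : ∀ a a', 0 ≤ Dmat a a')
    (hdD : ∀ a, d a ≤ Real.sqrt (Dmat a a / 2))
    (h : Fin K → ℝ) (hh : ∀ a, h a = ∑ a', α a' * Dmat a a') :
    (∑ a, α a * d a) ^ 2 ≤ ((m : ℝ) / 2) * ∑ a, α a * ∑ a', G a a' * h a' := by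
  -- basic positivity facts
  have hh0 : ∀ a, 0 ≤ h a := by
    intro a; rw [hh]
    exact Finset.sum_nonneg fun a' _ => mul_nonneg (hα0 a') (hDmat0 a a')
  have hG0 : ∀ a a', 0 ≤ G a a' := by
    intro a a'; rcases hG01 a a' with h1 | h1 <;> rw [h1] <;> norm_num
  have hd2 : ∀ a, d a ^ 2 ≤ Dmat a a / 2 := by
    intro a
    have h2 : (0:ℝ) ≤ Dmat a a / 2 := by linarith [hDmat0 a a]
    calc d a ^ 2 ≤ Real.sqrt (Dmat a a / 2) ^ 2 :=
          pow_le_pow_left₀ (hd0 a) (hdD a) 2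
      _ = Dmat a a / 2 := Real.sq_sqrt h2
  have hhlow : ∀ a, α a * Dmat a a ≤ h a := by
    intro a; rw [hh]
    exact Finset.single_le_sum (fun a' _ => mul_nonneg (hα0 a') (hDmat0 a a'))
      (Finset.mem_univ a)
  -- the cliques partition the vertex set
  have hdisj : (𝒞 : Set (Finset (Fin K))).PairwiseDisjoint id := by
    intro C hC C' hC' hne
    simp only [Finset.disjoint_left, id]
    intro a haC haC'
    obtain ⟨C₀, _, huniq⟩ := hcover a
    exact hne ((huniq C ⟨hC, haC⟩).trans (huniq C' ⟨hC', haC'⟩).symm)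
  have hunion : (Finset.univ : Finset (Fin K)) = 𝒞.biUnion id := by
    ext a
    simp only [Finset.mem_biUnion, Finset.mem_univ, true_iff, id]
    obtain ⟨C, ⟨hC, haC⟩, _⟩ := hcover a
    exact ⟨C, hC, haC⟩
  have hsum : ∀ f : Fin K → ℝ, ∑ a, f a = ∑ C ∈ 𝒞, ∑ a ∈ C, f a := by
    intro f; rw [hunion, Finset.sum_biUnion hdisj]; rfl
  set A : Finset (Fin K) → ℝ := fun C => ∑ a ∈ C, α a with hA
  set B : Finset (Fin K) → ℝ := fun C => ∑ a ∈ C, α a * d a with hB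
  set E : Finset (Fin K) → ℝ := fun C => ∑ a ∈ C, α a * d a ^ 2 with hE
  have hA0 : ∀ C, 0 ≤ A C := fun C => Finset.sum_nonneg fun a _ => hα0 a
  have hE0 : ∀ C, 0 ≤ E C := fun C =>
    Finset.sum_nonneg fun a _ => mul_nonneg (hα0 a) (sq_nonneg _)
  -- within-clique Cauchy-Schwarz
  have hCS : ∀ C : Finset (Fin K), B C ^ 2 ≤ A C * E C := by
    intro C
    have := Finset.sum_mul_sq_le_sq_mul_sq C (fun a => Real.sqrt (α a))
      (fun a => Real.sqrt (α a) * d a)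
    have e1 : ∑ a ∈ C, Real.sqrt (α a) * (Real.sqrt (α a) * d a) = B C := by
      apply Finset.sum_congr rfl; intro a _
      rw [← mul_assoc, Real.mul_self_sqrt (hα0 a)]
    have e2 : ∑ a ∈ C, Real.sqrt (α a) ^ 2 = A C := by
      apply Finset.sum_congr rfl; intro a _
      exact Real.sq_sqrt (hα0 a)
    have e3 : ∑ a ∈ C, (Real.sqrt (α a) * d a) ^ 2 = E C := by
      apply Finset.sum_congr rfl; intro a _
      rw [mul_pow, Real.sq_sqrt (hα0 a)]
    rwa [e1, e2, e3] at this
  -- outer Cauchy-Schwarz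
  have houter : (∑ C ∈ 𝒞, B C) ^ 2 ≤ (m : ℝ) * ∑ C ∈ 𝒞, B C ^ 2 := by
    have := Finset.sum_mul_sq_le_sq_mul_sq 𝒞 (fun _ => (1:ℝ)) B
    simpa [hm] using this
  -- lower bound for the RHS, clique by clique
  have hRHS : ∀ C ∈ 𝒞, A C * (2 * E C) ≤
      ∑ a ∈ C, α a * ∑ a', G a a' * h a' := by
    intro C hC
    -- key: for a ∈ C, ∑_{a'∈C} h a' ≤ ∑_{a'} G a a' * h a'
    have hkey : ∀ a ∈ C, ∑ a' ∈ C, h a' ≤ ∑ a', G a a' * h a' := by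
      intro a ha
      have e : ∑ a' ∈ C, h a' = ∑ a' ∈ C, G a a' * h a' := by
        apply Finset.sum_congr rfl; intro a' ha'
        rw [hclique C hC a ha a' ha', one_mul]
      rw [e]
      exact Finset.sum_le_sum_of_subset_of_nonneg (Finset.subset_univ C)
        (fun a' _ _ => mul_nonneg (hG0 a a') (hh0 a'))
    have hEh : 2 * E C ≤ ∑ a' ∈ C, h a' := by
      rw [hE, Finset.mul_sum]
      apply Finset.sum_le_sum
      intro a' _
      calc 2 * (α a' * d a' ^ 2) ≤ 2 * (α a' * (Dmat a' a' / 2)) := by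
            apply mul_le_mul_of_nonneg_left _ (by norm_num)
            exact mul_le_mul_of_nonneg_left (hd2 a') (hα0 a')
        _ = α a' * Dmat a' a' := by ring
        _ ≤ h a' := hhlow a'
    calc A C * (2 * E C) = ∑ a ∈ C, α a * (2 * E C) := by
          rw [hA, Finset.sum_mul]
      _ ≤ ∑ a ∈ C, α a * ∑ a', G a a' * h a' := by
          apply Finset.sum_le_sum
          intro a ha
          exact mul_le_mul_of_nonneg_left ((hEh).trans (hkey a ha)) (hα0 a)
  -- assemble
  have hmain : (m : ℝ) * ∑ C ∈ 𝒞, A C * E C ≤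
      ((m : ℝ) / 2) * ∑ a, α a * ∑ a', G a a' * h a' := by
    rw [hsum (fun a => α a * ∑ a', G a a' * h a')]
    have : ∑ C ∈ 𝒞, A C * (2 * E C) ≤
        ∑ C ∈ 𝒞, ∑ a ∈ C, α a * ∑ a', G a a' * h a' :=
      Finset.sum_le_sum hRHS
    have e : ∑ C ∈ 𝒞, A C * (2 * E C) = 2 * ∑ C ∈ 𝒞, A C * E C := by
      rw [Finset.mul_sum]; apply Finset.sum_congr rfl; intro C _; ring
    rw [e] at this
    nlinarith [this]
  calc (∑ a, α a * d a) ^ 2 = (∑ C ∈ 𝒞, B C) ^ 2 := by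
        rw [hsum (fun a => α a * d a)]
    _ ≤ (m : ℝ) * ∑ C ∈ 𝒞, B C ^ 2 := houter
    _ ≤ (m : ℝ) * ∑ C ∈ 𝒞, A C * E C := by
        apply mul_le_mul_of_nonneg_left (Finset.sum_le_sum fun C _ => hCS C)
          (Nat.cast_nonneg m)
    _ ≤ _ := hmain
end
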